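/- If S = ⟨Γn, O⟩ is a symptom (i.e., Conf(S) has no answer set), then every answer set X of the diagnostic program D0(S) determines a nonempty explanation E: X contains at least one atom o(a,t) with a exogenous and hpd(a,t) ∉ Γn. -/

import Mathlib

/-- A ground rule of A-Prolog: head (none = ⊥, i.e. a constraint),
positive body atoms, and default-negated body atoms. -/
structure ASPRule (L : Type) where
  head : Option L
  pos : Set L
  neg : Set L

/-- `Closed X Y P`: `Y` is closed under the Gelfond–Lifschitz reduct of `P`
relative to `X`. -/
def Closed {L : Type} (X Y : Set L) (P : Set (ASPRule L)) : Prop :=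
  ∀ r ∈ P, (∀ l ∈ r.neg, l ∉ X) → r.pos ⊆ Y → ∃ l, r.head = some l ∧ l ∈ Y

/-- `X` is an answer set of `P`: `X` is minimal among the sets closed under
the reduct `P^X`. -/
def AnswerSet {L : Type} (P : Set (ASPRule L)) (X : Set L) : Prop :=
  Closed X X P ∧ ∀ Y ⊆ X, Closed X Y P → Y = X

/-- A fact. -/
def fact {L : Type} (a : L) : ASPRule L := ⟨some a, ∅, ∅⟩
/-- A fluent literal: a fluent together with a sign (`true` = positive). -/
abbrev FLit (F : Type) := F × Bool

/-- The complement of a fluent literal. -/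
def fcompl {F : Type} (l : FLit F) : FLit F := (l.1, !l.2)

/-- A dynamic causal law `causes(act, hd, pre)` with ordered preconditions. -/
structure DynLaw (A F : Type) where
  act : A
  hd : FLit F
  pre : List (FLit F)

/-- A static causal law `caused(hd, pre)` with ordered preconditions. -/
structure StatLaw (F : Type) where
  hd : FLit F
  pre : List (FLit F)

/-- An executability condition `impossible_if(act, pre)`. -/
structure ImpLaw (A F : Type) where
  act : A
  pre : List (FLit F)

/-- An action description of the language AL. -/
structure ActionDescr (A F : Type) where
  dyn : Set (DynLaw A F)
  stat : Set (StatLaw F)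
  imp : Set (ImpLaw A F)

/-- All literals of a list hold in `σ`. -/
def lsub {F : Type} (P : List (FLit F)) (σ : Set (FLit F)) : Prop :=
  ∀ l ∈ P, l ∈ σ

/-- Completeness: each fluent or its negation belongs to `σ`. -/
def FComplete {F : Type} (σ : Set (FLit F)) : Prop :=
  ∀ f : F, (f, true) ∈ σ ∨ (f, false) ∈ σ

/-- Consistency: no fluent literal occurs together with its complement. -/
def FConsistent {F : Type} (σ : Set (FLit F)) : Prop :=
  ∀ l ∈ σ, fcompl l ∉ σ

/-- Closure under the static causal laws. -/
def ClosedStat {A F : Type} (D : ActionDescr A F) (σ : Set (FLit F)) : Prop :=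
  ∀ s ∈ D.stat, lsub s.pre σ → s.hd ∈ σ

/-- A state of the transition system described by `D`. -/
def IsState {A F : Type} (D : ActionDescr A F) (σ : Set (FLit F)) : Prop :=
  FComplete σ ∧ FConsistent σ ∧ ClosedStat D σ

/-- `Cn_Z(S)`: the smallest set containing `S`, closed under static laws. -/
def CnZ {A F : Type} (D : ActionDescr A F) (S : Set (FLit F)) : Set (FLit F) :=
  ⋂₀ { X | S ⊆ X ∧ ∀ s ∈ D.stat, lsub s.pre X → s.hd ∈ X }

/-- `E(a,σ)`: the direct effects of compound action `a` in `σ`. -/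
def dirEff {A F : Type} (D : ActionDescr A F) (a : Set A) (σ : Set (FLit F)) :
    Set (FLit F) :=
  { l | ∃ d ∈ D.dyn, d.act ∈ a ∧ lsub d.pre σ ∧ d.hd = l }

/-- The McCain–Turner transition relation. -/
def ALTrans {A F : Type} (D : ActionDescr A F) (σ : Set (FLit F)) (a : Set A)
    (σ' : Set (FLit F)) : Prop :=
  IsState D σ ∧ IsState D σ' ∧
  (∀ i ∈ D.imp, i.act ∈ a → ¬ lsub i.pre σ) ∧
  σ' = CnZ D (dirEff D a σ ∪ (σ ∩ σ'))
/-- Names of reified laws: a dynamic or a static law. -/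
abbrev LawName (A F : Type) := DynLaw A F ⊕ StatLaw F

/-- Atoms of the reified encoding. -/
inductive AtomR (A F : Type) where
  | h : FLit F → ℕ → AtomR A F
  | o : A → ℕ → AtomR A F
  | hpd : A → ℕ → AtomR A F
  | obs : FLit F → ℕ → AtomR A F
  | noo : A → ℕ → AtomR A F          -- the literal ¬o(a,t) of the choice rules
  | dlaw : LawName A F → AtomR A F
  | slaw : LawName A F → AtomR A F
  | hd : LawName A F → FLit F → AtomR A F
  | act : LawName A F → A → AtomR A F
  | prec : LawName A F → ℕ → Option (FLit F) → AtomR A F   -- `none` is `nil`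
  | allh : LawName A F → ℕ → ℕ → AtomR A F
  | prech : LawName A F → ℕ → AtomR A F

/-- The facts `prec(d,1,l1),...,prec(d,m,lm),prec(d,m+1,nil)`. -/
def precFacts {A F : Type} (nm : LawName A F) (pre : List (FLit F)) :
    Set (ASPRule (AtomR A F)) :=
  { r | (∃ i l, pre[(i : ℕ)]? = some l ∧ r = fact (AtomR.prec nm (i+1) (some l))) ∨
        r = fact (AtomR.prec nm (pre.length + 1) none) }

/-- `α(SD)` over horizon `n`: reifying facts for dynamic and static laws, and
constraints for executability conditions. -/
def alphaSD {A F : Type} (D : ActionDescr A F) (n : ℕ) :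
    Set (ASPRule (AtomR A F)) :=
  { r | ∃ d ∈ D.dyn, r = fact (AtomR.dlaw (Sum.inl d)) ∨
        r = fact (AtomR.hd (Sum.inl d) d.hd) ∨
        r = fact (AtomR.act (Sum.inl d) d.act) ∨ r ∈ precFacts (Sum.inl d) d.pre } ∪
  { r | ∃ s ∈ D.stat, r = fact (AtomR.slaw (Sum.inr s)) ∨
        r = fact (AtomR.hd (Sum.inr s) s.hd) ∨ r ∈ precFacts (Sum.inr s) s.pre } ∪
  { r | ∃ i ∈ D.imp, ∃ t < n,
        r = ⟨none, { x | ∃ l ∈ i.pre, x = AtomR.h l t } ∪ {AtomR.o i.act t}, ∅⟩ }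

/-- The interpreter rules (1)-(7) of the program `Π`, grounded over horizon `n`. -/
def interp (A F : Type) (n : ℕ) : Set (ASPRule (AtomR A F)) :=
  { r | ∃ nm : LawName A F, ∃ l : FLit F, ∃ a : A, ∃ t < n,
      r = ⟨some (AtomR.h l (t+1)),
           {AtomR.dlaw nm, AtomR.hd nm l, AtomR.act nm a, AtomR.o a t,
            AtomR.prech nm t}, ∅⟩ } ∪
  { r | ∃ nm : LawName A F, ∃ l : FLit F, ∃ t ≤ n,
      r = ⟨some (AtomR.h l t), {AtomR.slaw nm, AtomR.hd nm l, AtomR.prech nm t}, ∅⟩ } ∪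
  { r | ∃ nm : LawName A F, ∃ N : ℕ, ∃ t ≤ n,
      r = ⟨some (AtomR.allh nm N t), {AtomR.prec nm N none}, ∅⟩ } ∪
  { r | ∃ nm : LawName A F, ∃ N : ℕ, ∃ p : FLit F, ∃ t ≤ n,
      r = ⟨some (AtomR.allh nm N t),
           {AtomR.prec nm N (some p), AtomR.h p t, AtomR.allh nm (N+1) t}, ∅⟩ } ∪
  { r | ∃ nm : LawName A F, ∃ t ≤ n,
      r = ⟨some (AtomR.prech nm t), {AtomR.allh nm 1 t}, ∅⟩ } ∪
  { r | ∃ l : FLit F, ∃ t < n,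
      r = ⟨some (AtomR.h l (t+1)), {AtomR.h l t}, {AtomR.h (fcompl l) (t+1)}⟩ } ∪
  { r | ∃ l : FLit F, ∃ t ≤ n,
      r = ⟨none, {AtomR.h l t, AtomR.h (fcompl l) t}, ∅⟩ }

/-- The interpreter rules (8)-(10): `o(A,T) ← hpd(A,T)`, `h(L,0) ← obs(L,0)`,
and the reality check `← obs(L,T), not h(L,T)`. -/
def interpHist (A F : Type) (n : ℕ) : Set (ASPRule (AtomR A F)) :=
  { r | ∃ e : A, ∃ t < n, r = ⟨some (AtomR.o e t), {AtomR.hpd e t}, ∅⟩ } ∪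
  { r | ∃ l : FLit F, r = ⟨some (AtomR.h l 0), {AtomR.obs l 0}, ∅⟩ } ∪
  { r | ∃ l : FLit F, ∃ t ≤ n, r = ⟨none, {AtomR.obs l t}, {AtomR.h l t}⟩ }

/-- A recorded history: observations `obs(l,t)` and happenings `hpd(a,t)`. -/
structure Hist (A F : Type) where
  obs : Set (FLit F × ℕ)
  hpd : Set (A × ℕ)

/-- Union of two histories. -/
def Hist.union {A F : Type} (Γ Γ' : Hist A F) : Hist A F :=
  ⟨Γ.obs ∪ Γ'.obs, Γ.hpd ∪ Γ'.hpd⟩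

/-- The facts of a recorded history. -/
def histFacts {A F : Type} (Γ : Hist A F) : Set (ASPRule (AtomR A F)) :=
  { r | ∃ p ∈ Γ.obs, r = fact (AtomR.obs p.1 p.2) } ∪
  { r | ∃ p ∈ Γ.hpd, r = fact (AtomR.hpd p.1 p.2) }

/-- The reified encoding `α(SD,Γn)` of the domain description. -/
def alphaProg {A F : Type} (D : ActionDescr A F) (n : ℕ) (Γ : Hist A F) :
    Set (ASPRule (AtomR A F)) :=
  alphaSD D n ∪ interp A F n ∪ interpHist A F n ∪ histFacts Γ

/-- The awareness axioms `h(F,0) ← not h(¬F,0)` and `h(¬F,0) ← not h(F,0)`. -/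
def awareness (A F : Type) : Set (ASPRule (AtomR A F)) :=
  { r | ∃ f : F, r = ⟨some (AtomR.h (f, true) 0), ∅, {AtomR.h (f, false) 0}⟩ ∨
        r = ⟨some (AtomR.h (f, false) 0), ∅, {AtomR.h (f, true) 0}⟩ }

/-- The path `⟨σ0,a0,...,a_{n-1},σn⟩` is a model of the recorded history `Γ`. -/
def IsModelOf {A F : Type} (D : ActionDescr A F) (n : ℕ) (Γ : Hist A F)
    (σ : ℕ → Set (FLit F)) (a : ℕ → Set A) : Prop :=
  (∀ t < n, ALTrans D (σ t) (a t) (σ (t+1))) ∧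
  (∀ t < n, a t = { e | (e, t) ∈ Γ.hpd }) ∧
  (∀ l t, (l, t) ∈ Γ.obs → t ≤ n → l ∈ σ t)

/-- A set `X` of atoms defines the sequence `⟨σ0,a0,...,a_{n-1},σn⟩`. -/
def DefinesR {A F : Type} (n : ℕ) (X : Set (AtomR A F)) (σ : ℕ → Set (FLit F))
    (a : ℕ → Set A) : Prop :=
  (∀ k ≤ n, σ k = { l | AtomR.h l k ∈ X }) ∧
  (∀ k < n, a k = { e | AtomR.o e k ∈ X })

/-- The program `Conf(S)` of a configuration `S = ⟨Γn, O⟩`: the reified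
encoding of `SD` with the facts of `Γn ∪ O` over horizon `m`, together with
the awareness axioms. -/
def ConfProg {A F : Type} (D : ActionDescr A F) (m : ℕ) (Γ O : Hist A F) :
    Set (ASPRule (AtomR A F)) :=
  alphaProg D m (Γ.union O) ∪ awareness A F

/-- `⟨Γn, O⟩` is a symptom: `Γn` is consistent but `Γn ∪ O` is not. -/
def IsSymptom {A F : Type} (D : ActionDescr A F) (n m : ℕ) (Γ O : Hist A F) :
    Prop :=
  (∃ σ a, IsModelOf D n Γ σ a) ∧ ¬∃ σ a, IsModelOf D m (Γ.union O) σ a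

/-- The basic diagnostic module `DM0`: choice rules generating arbitrary
occurrences of exogenous actions at times `0 ≤ t < n`, encoded via the pair
of rules `o(A,T) ← not ¬o(A,T)` and `¬o(A,T) ← not o(A,T)`. -/
def dm0 {A F : Type} (exog : A → Prop) (n : ℕ) : Set (ASPRule (AtomR A F)) :=
  { r | ∃ a, exog a ∧ ∃ t < n,
      (r = ⟨some (AtomR.o a t), ∅, {AtomR.noo a t}⟩ ∨
       r = ⟨some (AtomR.noo a t), ∅, {AtomR.o a t}⟩) }

/-- The diagnostic program `D0(S) = Conf(S) ∪ DM0`. -/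
def d0Prog {A F : Type} (D : ActionDescr A F) (exog : A → Prop) (n m : ℕ)
    (Γ O : Hist A F) : Set (ASPRule (AtomR A F)) :=
  ConfProg D m Γ O ∪ dm0 exog n

/-- `⟨E,Δ⟩` is a candidate diagnosis of the symptom `⟨Γn,O⟩`: `E` is a set of
occurrences of exogenous actions at times `< n` such that `Γn ∪ O ∪ E` has a
model `M`, and `Δ` is the set of components `c` with `M ⊨ h(ab(c),m)`. -/
def CandidateDiag {A F C : Type} (D : ActionDescr A F) (exog : A → Prop)
    (ab : C → F) (n m : ℕ) (Γ O : Hist A F) (E : Set (A × ℕ)) (Δ : Set C) :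
    Prop :=
  (∀ p ∈ E, exog p.1 ∧ p.2 < n) ∧
  ∃ σ a, IsModelOf D m ((Γ.union O).union ⟨∅, E⟩) σ a ∧
    Δ = { c | (ab c, true) ∈ σ m }

/-- `⟨E,Δ⟩` is determined by the set `X` of ground literals. -/
def Determines {A F C : Type} (exog : A → Prop) (ab : C → F) (n m : ℕ)
    (X : Set (AtomR A F)) (E : Set (A × ℕ)) (Δ : Set C) : Prop :=
  E = { p | AtomR.o p.1 p.2 ∈ X ∧ exog p.1 ∧ p.2 < n } ∧
  Δ = { c | AtomR.h (ab c, true) m ∈ X }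

/-!
If every exogenous occurrence `o(a,t)` chosen in `X` were recorded as `hpd(a,t)` in `Γn`,
the choices would be derivable in `Conf(S)` alone. Splitting `D0(S)` then makes the
restriction of `X` to the atoms of `Conf(S)` an answer set of `Conf(S)`, contradicting
that `S` is a symptom.
-/

section AnswerSets

variable {L : Type}

def ASPRule.Over (V : Set L) (r : ASPRule L) : Prop :=
  (∀ l ∈ r.head, l ∈ V) ∧ r.pos ⊆ V ∧ r.neg ⊆ V

theorem Closed.head_mem {X Y : Set L} {P : Set (ASPRule L)} (hY : Closed X Y P)
    {l : L} {pos neg : Set L} (hr : ⟨some l, pos, neg⟩ ∈ P)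
    (hneg : ∀ x ∈ neg, x ∉ X) (hpos : pos ⊆ Y) : l ∈ Y := by
  obtain ⟨l', hl', hl'Y⟩ := hY _ hr hneg hpos
  cases hl'
  exact hl'Y

/-- A variant of the Splitting Set Theorem: `V` plays the bottom part, and `Q` may
mention `V` but only derives atoms of `C`. -/
theorem AnswerSet.inter_of_union {P Q : Set (ASPRule L)} {X V C : Set L}
    (hX : AnswerSet (P ∪ Q) X) (hP : ∀ r ∈ P, r.Over V)
    (hQ : ∀ r ∈ Q, ∀ l ∈ r.head, l ∈ C)
    (hC : ∀ Y, Closed (X ∩ V) Y P → X ∩ V ∩ C ⊆ Y) :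
    AnswerSet P (X ∩ V) := by
  obtain ⟨hXcl, hXmin⟩ := hX
  have hneg : ∀ r ∈ P, (∀ l ∈ r.neg, l ∉ X ∩ V) → ∀ l ∈ r.neg, l ∉ X :=
    fun r hr h l hl hlX => h l hl ⟨hlX, (hP r hr).2.2 hl⟩
  refine ⟨fun r hr hr_neg hr_pos => ?_, fun Y hYsub hYcl => ?_⟩
  · obtain ⟨l, hl, hlX⟩ := hXcl r (Or.inl hr) (hneg r hr hr_neg)
      (hr_pos.trans Set.inter_subset_left)
    exact ⟨l, hl, hlX, (hP r hr).1 l hl⟩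
  -- Adding back what `Q` derived turns a `P^{X ∩ V}`-closed `Y` into a `(P ∪ Q)^X`-closed set.
  have hY'X : Y ∪ X ∩ C ⊆ X :=
    Set.union_subset (hYsub.trans Set.inter_subset_left) Set.inter_subset_left
  have hY'cl : Closed X (Y ∪ X ∩ C) (P ∪ Q) := by
    rintro r (hr | hr) hr_neg hr_pos
    · have hposY : r.pos ⊆ Y := fun x hx => (hr_pos hx).elim id
        fun hxC => hC Y hYcl ⟨⟨hxC.1, (hP r hr).2.1 hx⟩, hxC.2⟩
      obtain ⟨l, hl, hlY⟩ := hYcl r hr (fun l hl hlXV => hr_neg l hl hlXV.1) hposY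
      exact ⟨l, hl, Or.inl hlY⟩
    · obtain ⟨l, hl, hlX⟩ := hXcl r (Or.inr hr) hr_neg (hr_pos.trans hY'X)
      exact ⟨l, hl, Or.inr ⟨hlX, hQ r hr l hl⟩⟩
  have hY' : Y ∪ X ∩ C = X := hXmin _ hY'X hY'cl
  refine hYsub.antisymm fun x hx => ?_
  rcases hY'.symm.subset hx.1 with hxY | hxC
  · exact hxY
  · exact hC Y hYcl ⟨hx, hxC.2⟩

end AnswerSets

section Diagnosis

variable {A F : Type}

/-- The atoms of `Conf(S)`: `noo` occurs only in `DM0`, and `o a t` only for `t < m`. -/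
def InConfVocab (m : ℕ) : AtomR A F → Prop
  | .o _ t => t < m
  | .noo _ _ => False
  | _ => True

def dm0Atoms (exog : A → Prop) (n : ℕ) : Set (AtomR A F) :=
  { x | ∃ a, exog a ∧ ∃ t < n, x = AtomR.o a t ∨ x = AtomR.noo a t }

theorem confProg_over (D : ActionDescr A F) (m : ℕ) (Γ O : Hist A F) :
    ∀ r ∈ ConfProg D m Γ O, r.Over {x | InConfVocab m x} := by
  rintro r ((((hsd | hint) | hhist) | hfacts) | haw)
  · rcases hsd with (⟨d, -, hd⟩ | ⟨s, -, hs⟩) | ⟨i, -, t, ht, rfl⟩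
    · rcases hd with rfl | rfl | rfl | ⟨i, l, -, rfl⟩ | rfl <;>
        simp [ASPRule.Over, fact, InConfVocab]
    · rcases hs with rfl | rfl | ⟨i, l, -, rfl⟩ | rfl <;>
        simp [ASPRule.Over, fact, InConfVocab]
    · refine ⟨by simp, ?_, by simp⟩
      rintro x (⟨l, -, rfl⟩ | rfl)
      exacts [trivial, ht]
  · rcases hint with (((((⟨_, _, _, t, ht, rfl⟩ | ⟨_, _, t, -, rfl⟩) | ⟨_, _, t, -, rfl⟩) |
      ⟨_, _, _, t, -, rfl⟩) | ⟨_, t, -, rfl⟩) | ⟨_, t, ht, rfl⟩) | ⟨_, t, -, rfl⟩ <;>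
      simp [ASPRule.Over, InConfVocab, Set.insert_subset_iff, *]
  · rcases hhist with (⟨_, t, ht, rfl⟩ | ⟨_, rfl⟩) | ⟨_, t, -, rfl⟩ <;>
      simp [ASPRule.Over, InConfVocab, *]
  · rcases hfacts with ⟨_, -, rfl⟩ | ⟨_, -, rfl⟩ <;> simp [ASPRule.Over, fact, InConfVocab]
  · rcases haw with ⟨_, rfl | rfl⟩ <;> simp [ASPRule.Over, InConfVocab]

theorem dm0_head_mem (exog : A → Prop) (n : ℕ) :
    ∀ r ∈ (dm0 exog n : Set (ASPRule (AtomR A F))), ∀ l ∈ r.head, l ∈ dm0Atoms exog n := by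
  rintro r ⟨a, ha, t, ht, rfl | rfl⟩ l hl <;> obtain rfl := Option.mem_some_iff.mp hl
  · exact ⟨a, ha, t, ht, Or.inl rfl⟩
  · exact ⟨a, ha, t, ht, Or.inr rfl⟩

theorem Closed.o_mem_of_hpd {D : ActionDescr A F} {m : ℕ} {Γ O : Hist A F}
    {Z Y : Set (AtomR A F)} (hY : Closed Z Y (ConfProg D m Γ O)) {a : A} {t : ℕ}
    (ha : (a, t) ∈ Γ.hpd) (ht : t < m) : AtomR.o a t ∈ Y := by
  have hhpd : AtomR.hpd a t ∈ Y :=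
    hY.head_mem (Or.inl (Or.inr (Or.inr ⟨(a, t), Or.inl ha, rfl⟩)))
      (by simp) (Set.empty_subset _)
  exact hY.head_mem (Or.inl (Or.inl (Or.inr (Or.inl (Or.inl ⟨a, t, ht, rfl⟩)))))
    (by simp) (Set.singleton_subset_iff.mpr hhpd)

end Diagnosis

/-- if `S = ⟨Γn,O⟩` is a symptom (i.e. `Conf(S)` has no answer
set), then every answer set `X` of `D0(S)` determines a nonempty explanation:
`X` contains some atom `o(a,t)` with `a` exogenous, `t < n`, and
`hpd(a,t) ∉ Γn`. -/
theorem answer_set_nonempty_explanation {A F : Type} (D : ActionDescr A F)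
    (exog : A → Prop) (n m : ℕ) (Γ O : Hist A F)
    (hsym : ¬∃ X : Set (AtomR A F), AnswerSet (ConfProg D m Γ O) X) :
    ∀ X : Set (AtomR A F), AnswerSet (d0Prog D exog n m Γ O) X →
      ∃ a t, exog a ∧ t < n ∧ AtomR.o a t ∈ X ∧ (a, t) ∉ Γ.hpd := by
  intro X hX
  by_contra! hrecorded
  refine hsym ⟨_, hX.inter_of_union (confProg_over D m Γ O) (dm0_head_mem exog n) ?_⟩
  rintro Y hY x ⟨⟨hxX, hxV⟩, a, ha, t, ht, rfl | rfl⟩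
  · exact hY.o_mem_of_hpd (hrecorded a t ha ht hxX) hxV
  · exact hxV.elim
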